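/- The cross-correlation coefficients C_{jp}^k vanish for all odd k: if k is odd then C_{jp}^k = 0, and moreover C_{jp}^k = (−1)^j (1 + (−1)^k) Σ_{m=0}^{j} Σ_{q=0}^{p} ((k+2+j+p)! / (k+2+j+p+m+q)!) B_m^j B_q^p. -/

import Mathlib

/-!
The recurrence is linear and commutes with the sign twist `X_m^j ↦ (-1)^(j+m+1) X_m^j`, and it
determines a family on the triangle `m ≤ j` from its rows `j = 0, 1`. The twisted `B` has the
same initial rows as `A`, hence `A_m^j = (-1)^(j+m+1) B_m^j`. Substituting this into `C_{jp}^k`,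
the two summands acquire the signs `(-1)^j` and `(-1)^(j+k)` independently of `m, q`, which gives
the closed formula, and the factor `1 + (-1)^k` vanishes for odd `k`.
-/

open Finset

/-- The recurrence satisfied by both coefficient families `A_m^j` and `B_m^j`
(indexing: `X j m` means `X_m^j`). -/
def CoeffRec (X : ℕ → ℕ → ℝ) : Prop :=
  ∀ j : ℕ, 1 ≤ j →
    (X (j+1) 0 = Real.sqrt ((2*(j:ℝ)+3)/(2*(j:ℝ)-1)) * X (j-1) 0) ∧
    (∀ m : ℕ, 1 ≤ m → m ≤ j - 1 →
      X (j+1) m = Real.sqrt ((2*(j:ℝ)+3)/(2*(j:ℝ)-1)) * X (j-1) m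
        - 2 * Real.sqrt ((2*(j:ℝ)+1)*(2*(j:ℝ)+3)) * X j (m-1)) ∧
    (X (j+1) j = -(2 * Real.sqrt ((2*(j:ℝ)+1)*(2*(j:ℝ)+3))) * X j (j-1)) ∧
    (X (j+1) (j+1) = -(2 * Real.sqrt ((2*(j:ℝ)+1)*(2*(j:ℝ)+3))) * X j j)

/-- The cross-correlation coefficients `C_{jp}^k` built from the families `A`, `B`. -/
noncomputable def crossC (A B : ℕ → ℕ → ℝ) (j p k : ℕ) : ℝ :=
  ∑ m ∈ Finset.range (j+1), ∑ q ∈ Finset.range (p+1),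
    (-1:ℝ)^(m+1) * (((k+2+j+p).factorial : ℝ) / ((k+2+j+p+m+q).factorial : ℝ)) *
      (A j m * B p q + (-1:ℝ)^(k+j+p+m+q) * B j m * A p q)

namespace CoeffRec

variable {X Y : ℕ → ℕ → ℝ}

theorem neg_one_pow_mul (hX : CoeffRec X) :
    CoeffRec (fun j m => (-1 : ℝ) ^ (j + m + 1) * X j m) := by
  intro j hj
  obtain ⟨i, rfl⟩ : ∃ i, j = i + 1 := ⟨j - 1, by omega⟩
  obtain ⟨h0, hmid, hdiag, hlast⟩ := hX (i + 1) hj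
  simp only [Nat.add_sub_cancel] at h0 hmid hdiag hlast ⊢
  refine ⟨by rw [h0]; ring, fun m hm1 hm2 => ?_, by rw [hdiag]; ring, by rw [hlast]; ring⟩
  obtain ⟨n, rfl⟩ : ∃ n, m = n + 1 := ⟨m - 1, by omega⟩
  rw [hmid (n + 1) hm1 hm2, Nat.add_sub_cancel]
  ring

theorem eq_of_initial (hX : CoeffRec X) (hY : CoeffRec Y)
    (h00 : X 0 0 = Y 0 0) (h10 : X 1 0 = Y 1 0) (h11 : X 1 1 = Y 1 1) :
    ∀ j, ∀ m ≤ j, X j m = Y j m := by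
  intro j
  induction j using Nat.twoStepInduction with
  | zero =>
    intro m hm
    obtain rfl : m = 0 := by omega
    exact h00
  | one =>
    intro m hm
    interval_cases m
    exacts [h10, h11]
  | more j ihj ihj1 =>
    intro m hm
    obtain ⟨h0, hmid, hdiag, hlast⟩ := hX (j + 1) (by omega)
    obtain ⟨g0, gmid, gdiag, glast⟩ := hY (j + 1) (by omega)
    simp only [Nat.add_sub_cancel] at h0 hmid hdiag hlast g0 gmid gdiag glast
    rcases (by omega : m = 0 ∨ (1 ≤ m ∧ m ≤ j) ∨ m = j + 1 ∨ m = j + 2)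
      with rfl | ⟨hm1, hm2⟩ | rfl | rfl
    · rw [h0, g0, ihj 0 (Nat.zero_le j)]
    · rw [hmid m hm1 hm2, gmid m hm1 hm2, ihj m hm2, ihj1 (m - 1) (by omega)]
    · rw [hdiag, gdiag, ihj1 j (by omega)]
    · rw [hlast, glast, ihj1 (j + 1) le_rfl]

end CoeffRec

theorem crossC_eq_of_antisymm {A B : ℕ → ℕ → ℝ}
    (hsym : ∀ j, ∀ m ≤ j, A j m = (-1 : ℝ) ^ (j + m + 1) * B j m) (j p k : ℕ) :
    crossC A B j p k
      = (-1 : ℝ) ^ j * (1 + (-1 : ℝ) ^ k) *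
          ∑ m ∈ range (j + 1), ∑ q ∈ range (p + 1),
            (((k + 2 + j + p).factorial : ℝ) / ((k + 2 + j + p + m + q).factorial : ℝ)) *
              B j m * B p q := by
  unfold crossC
  rw [mul_sum]
  refine sum_congr rfl fun m hm => ?_
  rw [mul_sum]
  refine sum_congr rfl fun q hq => ?_
  rw [hsym j m (Nat.lt_succ_iff.mp (mem_range.mp hm)),
    hsym p q (Nat.lt_succ_iff.mp (mem_range.mp hq))]
  have hsign₁ : (-1 : ℝ) ^ (m + 1) * (-1) ^ (j + m + 1) = (-1) ^ j := by
    rw [← pow_add]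
    exact neg_one_pow_congr (by rw [Nat.even_iff, Nat.even_iff]; omega)
  have hsign₂ : (-1 : ℝ) ^ (m + 1) * (-1) ^ (k + j + p + m + q) * (-1) ^ (p + q + 1)
      = (-1) ^ j * (-1) ^ k := by
    rw [← pow_add, ← pow_add, ← pow_add]
    exact neg_one_pow_congr (by rw [Nat.even_iff, Nat.even_iff]; omega)
  set F := ((k + 2 + j + p).factorial : ℝ) / ((k + 2 + j + p + m + q).factorial : ℝ)
  linear_combination F * B j m * B p q * (hsign₁ + hsign₂)

theorem crossC_odd_vanish_and_formula (A B : ℕ → ℕ → ℝ)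
    (hA0 : A 0 0 = -1) (hB0 : B 0 0 = 1)
    (hA10 : A 1 0 = Real.sqrt 3) (hA11 : A 1 1 = 2 * Real.sqrt 3)
    (hB10 : B 1 0 = Real.sqrt 3) (hB11 : B 1 1 = -(2 * Real.sqrt 3))
    (hArec : CoeffRec A) (hBrec : CoeffRec B) :
    ∀ j p k : ℕ,
      (Odd k → crossC A B j p k = 0) ∧
      crossC A B j p k
        = (-1:ℝ)^j * (1 + (-1:ℝ)^k) *
            ∑ m ∈ Finset.range (j+1), ∑ q ∈ Finset.range (p+1),
              (((k+2+j+p).factorial : ℝ) / ((k+2+j+p+m+q).factorial : ℝ)) *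
                B j m * B p q := by
  have hsym : ∀ j, ∀ m ≤ j, A j m = (-1 : ℝ) ^ (j + m + 1) * B j m :=
    hArec.eq_of_initial hBrec.neg_one_pow_mul
      (by rw [hA0, hB0]; norm_num) (by rw [hA10, hB10]; norm_num)
      (by rw [hA11, hB11]; norm_num)
  intro j p k
  have hC := crossC_eq_of_antisymm hsym j p k
  exact ⟨fun hk => by rw [hC, hk.neg_one_pow]; ring, hC⟩
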